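/- Let X ~ Bernoulli(p) with p ∈ [1/2, 1) and P_{Y|X} = BIBO(α,β) with α, β ∈ [0, 1/2) such that (1−α)(1−p) > βp. Then nontrivial utility under perfect privacy holds, i.e., h(P_c(X)) = h(p) > P_c(Y) = max{q, 1−q} where q := α(1−p) + (1−β)p, if and only if α(1−α)(1−p)² < β(1−β)p² and p ∈ (1/2, 1). -/

import Mathlib

/-!
Perfect privacy, `𝒫(F) ≤ P_c(X) = Pr(X = 1)`, holds exactly when in every column `z` of the filter
the best guess of `X` is `1`, i.e. `(P₀₀ - P₁₀) F₀z ≤ (P₁₁ - P₀₁) F₁z`, or `c F₀z ≤ F₁z` with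
`c = (P₀₀ - P₁₀) / (P₁₁ - P₀₁)`. Under this constraint the utility `Σ_z max ((1 - q) F₀z, q F₁z)`
is at most `max (q, 1 - q c)`, and the filter `[[1, 0, 0], [c, 1 - c, 0]]` attains `1 - q c`
when `q c < 1 - q`. Hence `h(p) > max (q, 1 - q)` iff `q c < 1 - q` and `c < 1`; clearing the
denominator, the first is `α(1-α)(1-p)² < β(1-β)p²` and the second is `p > 1/2`.
-/

open Finset

/-- Privacy `𝒫(F) = P_c(X|Z)` of a `2×3` filter, for a joint pmf `P` on `{0,1}²`. -/
noncomputable def privF2 (P : Fin 2 → Fin 2 → ℝ) (F : Fin 2 → Fin 3 → ℝ) : ℝ :=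
  ∑ z, ⨆ x, ∑ y, P x y * F y z

/-- Utility `𝒰(F) = P_c(Y|Z)` of a `2×3` filter. -/
noncomputable def utilF2 (P : Fin 2 → Fin 2 → ℝ) (F : Fin 2 → Fin 3 → ℝ) : ℝ :=
  ∑ z, ⨆ y, (∑ x, P x y) * F y z

/-- `F ∈ ℱ`: `F` is a row-stochastic `2×3` matrix. -/
def IsFilter2 (F : Fin 2 → Fin 3 → ℝ) : Prop :=
  (∀ y z, 0 ≤ F y z) ∧ ∀ y, ∑ z, F y z = 1

/-- The privacy-constrained guessing function `h(ε)` in the binary case. -/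
noncomputable def hFun2 (P : Fin 2 → Fin 2 → ℝ) (ε : ℝ) : ℝ :=
  sSup {u | ∃ F, IsFilter2 F ∧ privF2 P F ≤ ε ∧ u = utilF2 P F}

theorem ciSup_fin_two {α : Type*} [ConditionallyCompleteLinearOrder α] (f : Fin 2 → α) :
    ⨆ i, f i = max (f 0) (f 1) :=
  eq_of_forall_ge_iff fun c => by
    simp [ciSup_le_iff (Set.finite_range f).bddAbove, Fin.forall_fin_two]

theorem Finset.sum_max_le_sum_iff {ι M : Type*} [AddCommMonoid M] [LinearOrder M]
    [IsOrderedCancelAddMonoid M] (s : Finset ι) (f g : ι → M) :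
    ∑ i ∈ s, max (f i) (g i) ≤ ∑ i ∈ s, g i ↔ ∀ i ∈ s, f i ≤ g i := by
  have hle : ∀ i ∈ s, g i ≤ max (f i) (g i) := fun i _ => le_max_right _ _
  rw [(sum_le_sum hle).ge_iff_eq', eq_comm, sum_eq_sum_iff_of_le hle]
  exact forall₂_congr fun i _ => eq_comm.trans max_eq_right_iff

theorem sum_max_mul_le {ι : Type*} [Fintype ι] {a b c : ℝ} (hb : 0 ≤ b) {u v : ι → ℝ}
    (hu : ∀ i, 0 ≤ u i) (hsu : ∑ i, u i = 1) (hsv : ∑ i, v i = 1) (huv : ∀ i, c * u i ≤ v i) :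
    ∑ i, max (a * u i) (b * v i) ≤ max b (a + b * (1 - c)) := by
  have hbv : ∀ i, b * c * u i ≤ b * v i := fun i => by
    simpa only [mul_assoc] using mul_le_mul_of_nonneg_left (huv i) hb
  rcases le_or_gt a (b * c) with hac | hac
  · calc ∑ i, max (a * u i) (b * v i) = ∑ i, b * v i :=
          sum_congr rfl fun i _ => max_eq_right <|
            (mul_le_mul_of_nonneg_right hac (hu i)).trans (hbv i)
      _ = b := by rw [← mul_sum, hsv, mul_one]
      _ ≤ _ := le_max_left _ _
  · calc ∑ i, max (a * u i) (b * v i) ≤ ∑ i, ((a - b * c) * u i + b * v i) :=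
          sum_le_sum fun i _ => max_le (by linarith [hbv i])
            (by nlinarith [mul_nonneg (sub_nonneg.2 hac.le) (hu i)])
      _ = a + b * (1 - c) := by rw [sum_add_distrib, ← mul_sum, ← mul_sum, hsu, hsv]; ring
      _ ≤ _ := le_max_right _ _

theorem privF2_le_iff {P : Fin 2 → Fin 2 → ℝ} {F : Fin 2 → Fin 3 → ℝ} (hF : IsFilter2 F) :
    privF2 P F ≤ ∑ y, P 1 y ↔ ∀ z, ∑ y, P 0 y * F y z ≤ ∑ y, P 1 y * F y z := by
  have hX : ∑ z, ∑ y, P 1 y * F y z = ∑ y, P 1 y := by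
    rw [sum_comm]
    simp only [← mul_sum, hF.2, mul_one]
  simp only [privF2, ciSup_fin_two]
  rw [← hX, sum_max_le_sum_iff]
  simp

noncomputable def privacySlope (P : Fin 2 → Fin 2 → ℝ) : ℝ :=
  (P 0 0 - P 1 0) / (P 1 1 - P 0 1)

theorem privacySlope_mul_le {P : Fin 2 → Fin 2 → ℝ} {F : Fin 2 → Fin 3 → ℝ}
    (hB : 0 < P 1 1 - P 0 1) (hF : IsFilter2 F) (hpriv : privF2 P F ≤ ∑ y, P 1 y) (z : Fin 3) :
    privacySlope P * F 0 z ≤ F 1 z := by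
  have hz := (privF2_le_iff hF).1 hpriv z
  simp only [Fin.sum_univ_two] at hz
  rw [privacySlope, div_mul_eq_mul_div, div_le_iff₀ hB]
  linarith

theorem utilF2_le_of_privF2_le {P : Fin 2 → Fin 2 → ℝ} {F : Fin 2 → Fin 3 → ℝ}
    (hY : 0 ≤ ∑ x, P x 1) (hB : 0 < P 1 1 - P 0 1) (hF : IsFilter2 F)
    (hpriv : privF2 P F ≤ ∑ y, P 1 y) :
    utilF2 P F ≤ max (∑ x, P x 1) (∑ x, P x 0 + (∑ x, P x 1) * (1 - privacySlope P)) := by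
  simp only [utilF2, ciSup_fin_two]
  exact sum_max_mul_le hY (hF.1 0) (hF.2 0) (hF.2 1) (privacySlope_mul_le hB hF hpriv)

theorem hFun2_le {P : Fin 2 → Fin 2 → ℝ} (hY : 0 ≤ ∑ x, P x 1) (hB : 0 < P 1 1 - P 0 1) :
    hFun2 P (∑ y, P 1 y) ≤
      max (∑ x, P x 1) (∑ x, P x 0 + (∑ x, P x 1) * (1 - privacySlope P)) :=
  Real.sSup_le (by rintro _ ⟨F, hF, hpriv, rfl⟩; exact utilF2_le_of_privF2_le hY hB hF hpriv)
    (le_max_of_le_left hY)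

def slopeFilter (c : ℝ) : Fin 2 → Fin 3 → ℝ :=
  ![![1, 0, 0], ![c, 1 - c, 0]]

theorem isFilter2_slopeFilter {c : ℝ} (hc₀ : 0 ≤ c) (hc₁ : c ≤ 1) : IsFilter2 (slopeFilter c) :=
  ⟨by intro y z; fin_cases y <;> fin_cases z <;> simp [slopeFilter, hc₀, hc₁],
    by intro y; fin_cases y <;> simp [slopeFilter, Fin.sum_univ_three]⟩

theorem privF2_slopeFilter_le {P : Fin 2 → Fin 2 → ℝ} (hA : 0 ≤ P 0 0 - P 1 0)
    (hB : 0 < P 1 1 - P 0 1) (hc₁ : privacySlope P ≤ 1) :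
    privF2 P (slopeFilter (privacySlope P)) ≤ ∑ y, P 1 y := by
  have hc₀ : 0 ≤ privacySlope P := div_nonneg hA hB.le
  have hcB : privacySlope P * (P 1 1 - P 0 1) = P 0 0 - P 1 0 := div_mul_cancel₀ _ hB.ne'
  rw [privF2_le_iff (isFilter2_slopeFilter hc₀ hc₁)]
  intro z
  fin_cases z <;> simp [slopeFilter, Fin.sum_univ_two] <;> nlinarith

theorem utilF2_slopeFilter {P : Fin 2 → Fin 2 → ℝ} {c : ℝ} (hY : 0 ≤ ∑ x, P x 1) (hc₁ : c ≤ 1) :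
    utilF2 P (slopeFilter c) = max (∑ x, P x 0) ((∑ x, P x 1) * c) + (∑ x, P x 1) * (1 - c) := by
  have hz₁ := mul_nonneg hY (sub_nonneg.2 hc₁)
  simp only [Fin.sum_univ_two] at hz₁
  simp [utilF2, ciSup_fin_two, slopeFilter, Fin.sum_univ_three, Fin.sum_univ_two, hz₁]

theorem max_lt_hFun2_iff {P : Fin 2 → Fin 2 → ℝ} (hA : 0 ≤ P 0 0 - P 1 0)
    (hB : 0 < P 1 1 - P 0 1) (hY : 0 < ∑ x, P x 1) :
    max (∑ x, P x 1) (∑ x, P x 0) < hFun2 P (∑ y, P 1 y) ↔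
      (∑ x, P x 1) * privacySlope P < ∑ x, P x 0 ∧ privacySlope P < 1 := by
  set a := ∑ x, P x 0
  set b := ∑ x, P x 1
  set c := privacySlope P
  constructor
  · intro h
    have hlt := h.trans_le (hFun2_le hY.le hB)
    rw [lt_max_iff, max_lt_iff, max_lt_iff] at hlt
    rcases hlt with ⟨hb, -⟩ | ⟨hb, ha⟩
    · exact (lt_irrefl b hb).elim
    · exact ⟨by linarith, by nlinarith⟩
  · rintro ⟨hbc, hc₁⟩
    have hutil := utilF2_slopeFilter (P := P) hY.le hc₁.le
    rw [max_eq_left hbc.le] at hutil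
    refine lt_csSup_of_lt ⟨max b (a + b * (1 - c)), ?_⟩
      ⟨slopeFilter c, isFilter2_slopeFilter (div_nonneg hA hB.le) hc₁.le,
        privF2_slopeFilter_le hA hB hc₁.le, hutil.symm⟩
      (max_lt (by linarith) (by nlinarith))
    rintro _ ⟨F, hF, hpriv, rfl⟩
    exact utilF2_le_of_privF2_le hY.le hB hF hpriv

theorem perfect_privacy_nontrivial_utility_iff_general (p α β : ℝ)
    (hp : p ∈ Set.Ico (1 / 2 : ℝ) 1)
    (hα : α ∈ Set.Ico (0 : ℝ) (1 / 2))
    (hnt : β * p < (1 - α) * (1 - p))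
    (P : Fin 2 → Fin 2 → ℝ)
    (h00 : P 0 0 = (1 - p) * (1 - α)) (h01 : P 0 1 = (1 - p) * α)
    (h10 : P 1 0 = p * β) (h11 : P 1 1 = p * (1 - β)) :
    max (α * (1 - p) + (1 - β) * p) (1 - (α * (1 - p) + (1 - β) * p)) < hFun2 P p ↔
      (α * (1 - α) * (1 - p) ^ 2 < β * (1 - β) * p ^ 2 ∧ 1 / 2 < p) := by
  obtain ⟨hp₁, hp₂⟩ := hp
  obtain ⟨hα₀, hα₁⟩ := hα
  set q := α * (1 - p) + (1 - β) * p
  have hX : ∑ y, P 1 y = p := by rw [Fin.sum_univ_two, h10, h11]; ring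
  have hY₀ : ∑ x, P x 0 = 1 - q := by rw [Fin.sum_univ_two, h00, h10]; ring
  have hY₁ : ∑ x, P x 1 = q := by rw [Fin.sum_univ_two, h01, h11]; ring
  have hA : 0 < P 0 0 - P 1 0 := by rw [h00, h10]; linarith
  have hB : 0 < P 1 1 - P 0 1 := by rw [h01, h11]; nlinarith
  have hq : 0 < q := by nlinarith
  have key := max_lt_hFun2_iff hA.le hB (hY₁ ▸ hq)
  rw [hX, hY₀, hY₁] at key
  rw [key, privacySlope, mul_div_assoc', div_lt_iff₀ hB, div_lt_one hB, h00, h01, h10, h11]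
  exact and_congr (by constructor <;> intro h <;> linarith) (by constructor <;> intro h <;> linarith)

/-- nontrivial utility under perfect privacy, `h(P_c(X)) > P_c(Y)`,
holds if and only if `α(1−α)(1−p)² < β(1−β)p²` and `p ∈ (1/2, 1)`, where
`P_c(Y) = max{q, 1−q}` with `q = α(1−p) + (1−β)p`. -/
theorem perfect_privacy_nontrivial_utility_iff (p α β : ℝ)
    (hp : p ∈ Set.Ico (1 / 2 : ℝ) 1)
    (hα : α ∈ Set.Ico (0 : ℝ) (1 / 2))
    (hβ : β ∈ Set.Ico (0 : ℝ) (1 / 2))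
    (hnt : β * p < (1 - α) * (1 - p))
    (P : Fin 2 → Fin 2 → ℝ)
    (h00 : P 0 0 = (1 - p) * (1 - α)) (h01 : P 0 1 = (1 - p) * α)
    (h10 : P 1 0 = p * β) (h11 : P 1 1 = p * (1 - β)) :
    max (α * (1 - p) + (1 - β) * p) (1 - (α * (1 - p) + (1 - β) * p)) < hFun2 P p ↔
      (α * (1 - α) * (1 - p) ^ 2 < β * (1 - β) * p ^ 2 ∧ 1 / 2 < p) :=
  perfect_privacy_nontrivial_utility_iff_general p α β hp hα hnt P h00 h01 h10 h11
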